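/- Let g : 𝔻 → ℂ be a univalent (injective holomorphic) map with g(0) = 0 and g'(0) = c ≠ 0. For every ε > 0 there exists r ∈ (0, 1/2) and a (1+ε)-quasiconformal homeomorphism f : 𝔻 → g(𝔻) such that f(z) = cz for all |z| ≤ r and f(z) = g(z) for all z ∈ 𝔻 with |z| ≥ 2r. -/

import Mathlib

/-!
Let `h` be the holomorphic local inverse of `g` at `0` and `ψ(z) = h(cz) - z`, a `C¹` map with
`ψ(0) = 0` and `Dψ(0) = 0`. Cutting `ψ` off by a bump at a small scale `r` gives `u = φ ψ` with
`‖Du‖ ≤ λ` everywhere: `Dφ` is `O(1/r)`, but `ψ` is `o(r)` on the ball of radius `2r`.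
Then `η = id + u` is a bijection of `ℂ` (a contraction perturbation of the identity) that is the
identity for `|z| ≥ 2r`, and `|∂̄η| ≤ λ/(1-λ) |∂η|`. The map is `f = g ∘ η`: it equals
`g(h(cz)) = cz` for `|z| ≤ r`, and postcomposing with the conformal map `g` leaves the
dilatation unchanged.
-/

open Set Metric Complex

/-- The `∂f` part `a` of an ℝ-linear map `L : ℂ → ℂ`, `L(z) = a z + b z̄`. -/
noncomputable def wirtA (L : ℂ →L[ℝ] ℂ) : ℂ := (L 1 - Complex.I * L Complex.I) / 2

/-- The `∂̄f` part `b` of an ℝ-linear map `L : ℂ → ℂ`, `L(z) = a z + b z̄`. -/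
noncomputable def wirtB (L : ℂ →L[ℝ] ℂ) : ℂ := (L 1 + Complex.I * L Complex.I) / 2

/-- `f` is `K`-quasiconformal on the open set `s` (differentiable version):
`|∂̄f| ≤ k |∂f|` on `s` with `k = (K-1)/(K+1)`. -/
def IsQCOn (K : ℝ) (f : ℂ → ℂ) (s : Set ℂ) : Prop :=
  (∀ z ∈ s, DifferentiableAt ℝ f z) ∧
    ∀ z ∈ s, ‖wirtB (fderiv ℝ f z)‖ ≤ (K - 1) / (K + 1) * ‖wirtA (fderiv ℝ f z)‖

open Filter Function Topology
open scoped NNReal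

lemma wirtA_add (L M : ℂ →L[ℝ] ℂ) : wirtA (L + M) = wirtA L + wirtA M := by
  simp only [wirtA, FunLike.coe_add, Pi.add_apply]; ring

lemma wirtB_add (L M : ℂ →L[ℝ] ℂ) : wirtB (L + M) = wirtB L + wirtB M := by
  simp only [wirtB, FunLike.coe_add, Pi.add_apply]; ring

lemma wirtA_id : wirtA (ContinuousLinearMap.id ℝ ℂ) = 1 := by simp [wirtA]

lemma wirtB_id : wirtB (ContinuousLinearMap.id ℝ ℂ) = 0 := by simp [wirtB]

lemma norm_wirtA_le (L : ℂ →L[ℝ] ℂ) : ‖wirtA L‖ ≤ ‖L‖ := by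
  have h1 := L.le_opNorm 1
  have hI := L.le_opNorm I
  rw [norm_one, mul_one] at h1
  rw [norm_I, mul_one] at hI
  calc ‖wirtA L‖ ≤ (‖L 1‖ + ‖I * L I‖) / 2 := by
        rw [wirtA, norm_div, RCLike.norm_ofNat]; gcongr; exact norm_sub_le _ _
    _ ≤ ‖L‖ := by rw [norm_mul, norm_I, one_mul]; linarith

lemma norm_wirtB_le (L : ℂ →L[ℝ] ℂ) : ‖wirtB L‖ ≤ ‖L‖ := by
  have h1 := L.le_opNorm 1
  have hI := L.le_opNorm I
  rw [norm_one, mul_one] at h1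
  rw [norm_I, mul_one] at hI
  calc ‖wirtB L‖ ≤ (‖L 1‖ + ‖I * L I‖) / 2 := by
        rw [wirtB, norm_div, RCLike.norm_ofNat]; gcongr; exact norm_add_le _ _
    _ ≤ ‖L‖ := by rw [norm_mul, norm_I, one_mul]; linarith

lemma ContinuousLinearMap.apply_eq_map_one_mul {R : Type*} [CommSemiring R] [TopologicalSpace R]
    (L : R →L[R] R) (x : R) : L x = L 1 * x := by
  rw [mul_comm, ← smul_eq_mul, ← L.map_smul, smul_eq_mul, mul_one]

lemma wirtA_restrictScalars_comp (L : ℂ →L[ℂ] ℂ) (M : ℂ →L[ℝ] ℂ) :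
    wirtA ((L.restrictScalars ℝ).comp M) = L 1 * wirtA M := by
  simp only [wirtA, ContinuousLinearMap.comp_apply, ContinuousLinearMap.coe_restrictScalars']
  rw [L.apply_eq_map_one_mul (M 1), L.apply_eq_map_one_mul (M I)]
  ring

lemma wirtB_restrictScalars_comp (L : ℂ →L[ℂ] ℂ) (M : ℂ →L[ℝ] ℂ) :
    wirtB ((L.restrictScalars ℝ).comp M) = L 1 * wirtB M := by
  simp only [wirtB, ContinuousLinearMap.comp_apply, ContinuousLinearMap.coe_restrictScalars']
  rw [L.apply_eq_map_one_mul (M 1), L.apply_eq_map_one_mul (M I)]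
  ring

lemma norm_wirtB_id_add_le {U : ℂ →L[ℝ] ℂ} {l : ℝ} (hU : ‖U‖ ≤ l) (hl : l < 1) :
    ‖wirtB (ContinuousLinearMap.id ℝ ℂ + U)‖
      ≤ l / (1 - l) * ‖wirtA (ContinuousLinearMap.id ℝ ℂ + U)‖ := by
  rw [wirtA_add, wirtB_add, wirtA_id, wirtB_id, zero_add]
  have hA : 1 - l ≤ ‖1 + wirtA U‖ := by
    have := norm_sub_norm_le (1 : ℂ) (-wirtA U)
    rw [norm_one, norm_neg, sub_neg_eq_add] at this
    linarith [norm_wirtA_le U]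
  calc ‖wirtB U‖ ≤ l / (1 - l) * (1 - l) := by
        rw [div_mul_cancel₀ _ (by linarith)]; exact (norm_wirtB_le U).trans hU
    _ ≤ l / (1 - l) * ‖1 + wirtA U‖ := by
        gcongr
        exact div_nonneg ((norm_nonneg U).trans hU) (by linarith)

lemma isQCOn_id_add {K : ℝ} {u : ℂ → ℂ} {s : Set ℂ} (hK : 1 ≤ K)
    (hu : ∀ z ∈ s, DifferentiableAt ℝ u z) (hu' : ∀ z ∈ s, ‖fderiv ℝ u z‖ ≤ (K - 1) / (2 * K)) :
    IsQCOn K (fun z => z + u z) s := by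
  have hl : (K - 1) / (2 * K) < 1 := (div_lt_one (by linarith)).2 (by linarith)
  have hlK : (K - 1) / (2 * K) / (1 - (K - 1) / (2 * K)) = (K - 1) / (K + 1) := by
    rw [one_sub_div (by positivity), div_div_div_cancel_right₀ (by positivity)]
    ring_nf
  refine ⟨fun z hz => differentiableAt_id.add (hu z hz), fun z hz => ?_⟩
  rw [fderiv_fun_add differentiableAt_fun_id (hu z hz), fderiv_fun_id, ← hlK]
  exact norm_wirtB_id_add_le (hu' z hz) hl

lemma DifferentiableOn.isQCOn_comp {K : ℝ} {f g : ℂ → ℂ} {s t : Set ℂ}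
    (hg : DifferentiableOn ℂ g t) (ht : IsOpen t) (hf : IsQCOn K f s) (hfs : MapsTo f s t) :
    IsQCOn K (g ∘ f) s := by
  have hgz : ∀ z ∈ s, DifferentiableAt ℂ g (f z) :=
    fun z hz => hg.differentiableAt (ht.mem_nhds (hfs hz))
  refine ⟨fun z hz => ((hgz z hz).restrictScalars ℝ).comp z (hf.1 z hz), fun z hz => ?_⟩
  rw [fderiv_comp z ((hgz z hz).restrictScalars ℝ) (hf.1 z hz),
    (hgz z hz).fderiv_restrictScalars ℝ, wirtA_restrictScalars_comp, wirtB_restrictScalars_comp,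
    norm_mul, norm_mul, mul_left_comm]
  exact mul_le_mul_of_nonneg_left (hf.2 z hz) (norm_nonneg _)

theorem LipschitzWith.bijective_id_add {E : Type*} [NormedAddCommGroup E] [CompleteSpace E]
    {u : E → E} {K : ℝ≥0} (hu : LipschitzWith K u) (hK : K < 1) :
    Bijective fun x => x + u x := by
  refine ⟨fun x y hxy => ?_, fun y => ?_⟩
  · have hle : dist x y ≤ K * dist x y := by
      calc dist x y = dist (u y) (u x) := by
            rw [dist_eq_norm, dist_eq_norm]; congr 1
            rw [sub_eq_sub_iff_add_eq_add, add_comm (u y)]; exact hxy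
        _ ≤ K * dist x y := by rw [dist_comm x]; exact hu.dist_le_mul y x
    have : (K : ℝ) < 1 := hK
    exact dist_le_zero.mp (by nlinarith [dist_nonneg (x := x) (y := y)])
  · have hF : ContractingWith K fun z => y - u z := by
      refine ⟨hK, LipschitzWith.of_dist_le_mul fun a b => ?_⟩
      rw [dist_sub_left]; exact hu.dist_le_mul a b
    refine ⟨hF.fixedPoint, ?_⟩
    exact eq_sub_iff_add_eq.mp hF.fixedPoint_isFixedPt.symm

theorem bijective_id_add_of_norm_fderiv_le {E : Type*} [NormedAddCommGroup E] [NormedSpace ℝ E]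
    [CompleteSpace E] {u : E → E} {l : ℝ} (hu : Differentiable ℝ u)
    (hDu : ∀ z, ‖fderiv ℝ u z‖ ≤ l) (hl : l < 1) :
    Bijective fun x => x + u x :=
  (lipschitzWith_of_nnnorm_fderiv_le hu fun z =>
    (Real.le_toNNReal_iff_coe_le ((norm_nonneg _).trans (hDu z))).2 (hDu z)).bijective_id_add
      (Real.toNNReal_lt_one.2 hl)

lemma Function.Bijective.image_eq_self_of_eqOn_compl {α : Type*} {f : α → α} {s : Set α}
    (hf : Bijective f) (h : EqOn f id sᶜ) : f '' s = s := by
  rw [← compl_compl s, image_compl_eq hf, h.image_eq_self]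

section Cutoff

variable {E F : Type*} [NormedAddCommGroup E] [NormedSpace ℝ E] [NormedAddCommGroup F]
  [NormedSpace ℝ F]

lemma exists_bump_norm_fderiv_le_div [FiniteDimensional ℝ E] :
    ∃ B : ℝ, ∀ r > 0, ∃ φ : E → ℝ, Differentiable ℝ φ ∧ (∀ z, ‖φ z‖ ≤ 1) ∧
      (∀ z, ‖z‖ ≤ r → φ z = 1) ∧ (∀ z, 2 * r ≤ ‖z‖ → φ z = 0) ∧
      ∀ z, ‖fderiv ℝ φ z‖ ≤ B / r := by
  let b : ContDiffBump (0 : E) := ⟨1, 2, one_pos, one_lt_two⟩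
  have hb : Differentiable ℝ b := b.contDiff.differentiable one_ne_zero
  obtain ⟨B, hB⟩ := (b.hasCompactSupport.fderiv ℝ).exists_bound_of_continuous
    (b.contDiff.continuous_fderiv one_ne_zero)
  refine ⟨B, fun r hr => ⟨fun z => b (r⁻¹ • z), hb.comp (differentiable_id.const_smul _),
    fun z => ?_, fun z hz => ?_, fun z hz => ?_, fun z => ?_⟩⟩
  · rw [Real.norm_eq_abs, abs_of_nonneg b.nonneg]; exact b.le_one
  · refine b.one_of_mem_closedBall ?_
    rw [mem_closedBall_zero_iff, norm_smul, norm_inv, Real.norm_of_nonneg hr.le]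
    exact inv_mul_le_one_of_le₀ hz hr.le
  · refine b.zero_of_le_dist ?_
    rw [dist_zero_right, norm_smul, norm_inv, Real.norm_of_nonneg hr.le]
    exact (le_inv_mul_iff₀ hr).mpr (by rwa [mul_comm])
  · have hφ := (hb (r⁻¹ • z)).hasFDerivAt.comp z ((hasFDerivAt_id z).const_smul r⁻¹)
    rw [show (fun z => b (r⁻¹ • z)) = b ∘ (r⁻¹ • ·) from rfl, hφ.fderiv, div_eq_mul_inv]
    refine (ContinuousLinearMap.opNorm_comp_le _ _).trans (mul_le_mul (hB _) ?_ (by positivity)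
      ((norm_nonneg _).trans (hB 0)))
    refine (norm_smul_le _ _).trans ?_
    rw [norm_inv, Real.norm_of_nonneg hr.le]
    exact mul_le_of_le_one_right (by positivity) ContinuousLinearMap.norm_id_le

lemma ContDiffAt.exists_ball_norm_fderiv_le {ψ : E → F} (hψ : ContDiffAt ℝ 1 ψ 0)
    (hψ0 : ψ 0 = 0) (hDψ : HasFDerivAt ψ (0 : E →L[ℝ] F) 0) {δ : ℝ} (hδ : 0 < δ) :
    ∃ ρ > 0, ∀ z ∈ ball (0 : E) ρ,
      DifferentiableAt ℝ ψ z ∧ ‖fderiv ℝ ψ z‖ ≤ δ ∧ ‖ψ z‖ ≤ δ * ‖z‖ := by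
  have hcont : Tendsto (fun z => ‖fderiv ℝ ψ z‖) (𝓝 0) (𝓝 0) := by
    have := (hψ.continuousAt_fderiv one_ne_zero).norm
    rwa [ContinuousAt, hDψ.fderiv, norm_zero] at this
  obtain ⟨ρ, hρ, hψρ⟩ := Metric.eventually_nhds_iff_ball.1
    ((hψ.eventually (by simp)).and (hcont.eventually_le_const hδ))
  refine ⟨ρ, hρ, fun z hz => ⟨(hψρ z hz).1.differentiableAt one_ne_zero, (hψρ z hz).2, ?_⟩⟩
  simpa [hψ0] using (convex_ball (0 : E) ρ).norm_image_sub_le_of_norm_fderiv_le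
    (fun w hw => ((hψρ w hw).1.differentiableAt one_ne_zero)) (fun w hw => (hψρ w hw).2)
    (mem_ball_self hρ) hz

theorem exists_cutoff_norm_fderiv_le [FiniteDimensional ℝ E] {ψ : E → F}
    (hψ : ContDiffAt ℝ 1 ψ 0) (hψ0 : ψ 0 = 0) (hDψ : HasFDerivAt ψ (0 : E →L[ℝ] F) 0)
    {l R : ℝ} (hl : 0 < l) (hR : 0 < R) :
    ∃ r ∈ Ioo 0 R, ∃ u : E → F, Differentiable ℝ u ∧ (∀ z, ‖fderiv ℝ u z‖ ≤ l) ∧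
      (∀ z, ‖z‖ ≤ r → u z = ψ z) ∧ ∀ z, 2 * r ≤ ‖z‖ → u z = 0 := by
  obtain ⟨B, hB⟩ := exists_bump_norm_fderiv_le_div (E := E)
  have hB0 : 0 ≤ B := by
    obtain ⟨φ, -, -, -, -, hφ⟩ := hB 1 one_pos
    simpa using (norm_nonneg _).trans (hφ 0)
  set δ := l / (1 + 2 * B)
  have hδ : 0 < δ := by positivity
  obtain ⟨ρ, hρ, hψρ⟩ := hψ.exists_ball_norm_fderiv_le hψ0 hDψ hδ
  set r := min (R / 2) (ρ / 4)
  have hr : 0 < r := by positivity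
  have h2r : 2 * r < ρ := by linarith [min_le_right (R / 2) (ρ / 4)]
  obtain ⟨φ, hφd, hφ1, hφr, hφ2r, hDφ⟩ := hB r hr
  have hu : ∀ z, ∃ U : E →L[ℝ] F, HasFDerivAt (fun z => φ z • ψ z) U z ∧ ‖U‖ ≤ l := by
    intro z
    rcases le_or_gt ‖z‖ (2 * r) with hz | hz
    · have hzρ : z ∈ ball (0 : E) ρ := mem_ball_zero_iff.2 (hz.trans_lt h2r)
      refine ⟨_, (hφd z).hasFDerivAt.smul (hψρ z hzρ).1.hasFDerivAt, ?_⟩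
      calc _ ≤ ‖φ z‖ * ‖fderiv ℝ ψ z‖ + ‖fderiv ℝ φ z‖ * ‖ψ z‖ :=
            (norm_add_le _ _).trans (add_le_add (norm_smul_le _ _)
              (ContinuousLinearMap.norm_smulRight_apply _ _).le)
        _ ≤ 1 * δ + B / r * (δ * (2 * r)) := by
            gcongr
            exacts [hφ1 z, (hψρ z hzρ).2.1, hDφ z, (hψρ z hzρ).2.2.trans (by gcongr)]
        _ = δ * (1 + 2 * B) := by field_simp
        _ = l := div_mul_cancel₀ _ (by positivity)
    · refine ⟨0, (hasFDerivAt_const 0 z).congr_of_eventuallyEq ?_, by simpa using hl.le⟩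
      filter_upwards [(isOpen_lt continuous_const continuous_norm).mem_nhds hz] with w hw
      simp [hφ2r w (le_of_lt hw)]
  choose U hU hUl using hu
  refine ⟨r, ⟨hr, by linarith [min_le_left (R / 2) (ρ / 4)]⟩, fun z => φ z • ψ z,
    fun z => (hU z).differentiableAt, fun z => (hU z).fderiv ▸ hUl z, fun z hz => ?_,
    fun z hz => ?_⟩
  · simp [hφr z hz]
  · simp [hφ2r z hz]

end Cutoff

theorem ContDiffAt.exists_flat_comp_id_add_eq_mul {g : ℂ → ℂ} {c : ℂ} (hg : ContDiffAt ℂ 1 g 0)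
    (hc : HasDerivAt g c 0) (hc0 : c ≠ 0) (h0 : g 0 = 0) :
    ∃ ψ : ℂ → ℂ, ContDiffAt ℂ 1 ψ 0 ∧ HasFDerivAt ψ (0 : ℂ →L[ℂ] ℂ) 0 ∧ ψ 0 = 0 ∧
      ∀ᶠ z in 𝓝 0, g (z + ψ z) = c * z := by
  have hg' := hc.hasFDerivAt_equiv hc0
  have hs := hg.hasStrictDerivAt' hc one_ne_zero
  set h := hg.localInverse hg' one_ne_zero
  have hh : ContDiffAt ℂ 1 h (c * 0) := by
    simpa [h0] using hg.to_localInverse hg' one_ne_zero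
  have hh0 : h 0 = 0 := by simpa [h0] using hg.localInverse_apply_image hg' one_ne_zero
  have hDh : HasDerivAt h c⁻¹ (c * 0) := by
    have := (hs.to_localInverse hc0).hasDerivAt
    rw [h0] at this
    rwa [mul_zero]
  have hgh : ∀ᶠ y in 𝓝 0, g (h y) = y := by
    have := hs.eventually_right_inverse hc0
    rw [h0] at this
    exact this
  have hmul : Tendsto (c * ·) (𝓝 0) (𝓝 0) := by
    simpa using (continuous_const_mul c).tendsto 0
  refine ⟨fun z => h (c * z) - z, ?_, ?_, by simp [hh0], ?_⟩
  · exact (hh.comp 0 (contDiffAt_const.mul contDiffAt_id)).sub contDiffAt_id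
  · have : HasDerivAt (fun z => h (c * z) - z) (c⁻¹ * c - 1) 0 :=
      (hDh.comp 0 ((hasDerivAt_id 0).const_mul c)).sub (hasDerivAt_id 0) |>.congr_deriv (by simp)
    rw [inv_mul_cancel₀ hc0, sub_self] at this
    simpa using this.hasFDerivAt
  · filter_upwards [hmul.eventually hgh] with z hz
    simpa using hz

/-- **Interpolation lemma.** Let `g : 𝔻 → ℂ` be univalent with `g(0) = 0`, `g'(0) = c ≠ 0`.
For every `ε > 0` there are `r ∈ (0, 1/2)` and a `(1+ε)`-quasiconformal homeomorphism
`f : 𝔻 → g(𝔻)` with `f(z) = cz` on `|z| ≤ r` and `f = g` on `|z| ≥ 2r`. -/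
theorem interpolation_lemma
    (g : ℂ → ℂ) (c : ℂ)
    (hdiff : DifferentiableOn ℂ g (ball 0 1))
    (hinj : Set.InjOn g (ball 0 1))
    (h0 : g 0 = 0) (hc : deriv g 0 = c) (hc0 : c ≠ 0) :
    ∀ ε > (0:ℝ), ∃ r ∈ Set.Ioo (0:ℝ) (1/2), ∃ f : ℂ → ℂ,
      ContinuousOn f (ball 0 1) ∧
      Set.InjOn f (ball 0 1) ∧
      f '' ball 0 1 = g '' ball 0 1 ∧
      IsQCOn (1 + ε) f (ball 0 1) ∧
      (∀ z : ℂ, ‖z‖ ≤ r → f z = c * z) ∧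
      (∀ z ∈ ball (0:ℂ) 1, 2 * r ≤ ‖z‖ → f z = g z) := by
  intro ε hε
  have hball : ball (0 : ℂ) 1 ∈ 𝓝 0 := ball_mem_nhds 0 one_pos
  obtain ⟨ψ, hψ, hDψ, hψ0, hgψ⟩ := ((hdiff.contDiffOn isOpen_ball).contDiffAt hball)
    |>.exists_flat_comp_id_add_eq_mul (hc ▸ (hdiff.differentiableAt hball).hasDerivAt) hc0 h0
  obtain ⟨ρ, hρ, hgψρ⟩ := Metric.eventually_nhds_iff_ball.1 hgψ
  obtain ⟨r, ⟨hr, hrρ⟩, u, hu, hDu, huψ, hu0⟩ := exists_cutoff_norm_fderiv_le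
    (hψ.restrict_scalars ℝ) hψ0 (by simpa using hDψ.restrictScalars ℝ)
    (l := (1 + ε - 1) / (2 * (1 + ε))) (div_pos (by linarith) (by linarith))
    (lt_min one_half_pos hρ)
  set η := fun z => z + u z
  have hηbij : Bijective η := bijective_id_add_of_norm_fderiv_le hu hDu
    ((div_lt_one (by linarith)).2 (by linarith))
  have hη : η '' ball 0 1 = ball 0 1 := hηbij.image_eq_self_of_eqOn_compl fun z hz => by
    simp [η, hu0 z (by linarith [min_le_left (1 / 2) ρ, mem_ball_zero_iff.not.1 hz])]
  have hmaps : MapsTo η (ball 0 1) (ball 0 1) := mapsTo_iff_image_subset.2 hη.subset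
  have hqc : IsQCOn (1 + ε) (g ∘ η) (ball 0 1) := hdiff.isQCOn_comp isOpen_ball
    (isQCOn_id_add (by linarith) (fun z _ => hu z) (fun z _ => hDu z)) hmaps
  refine ⟨r, ⟨hr, hrρ.trans_le (min_le_left _ _)⟩, g ∘ η,
    fun z hz => (hqc.1 z hz).continuousAt.continuousWithinAt, hinj.comp hηbij.injective.injOn hmaps,
    by rw [image_comp, hη], hqc, fun z hz => ?_, fun z _ hz => by simp [η, hu0 z hz]⟩
  exact (congrArg g (by simp [η, huψ z hz])).trans
    (hgψρ z (mem_ball_zero_iff.2 (hz.trans_lt (hrρ.trans_le (min_le_right _ _)))))
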